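/- Let L ⊂ V = 𝔽₂^{2n} be a fixed Lagrangian subspace and let 0 ≤ m ≤ n. The number of m-dimensional isotropic subspaces S of V with S ∩ L = {0} equals binom(n,m)₂ · 2^{m(m+1)/2} · 2^{m(n−m)}. -/

import Mathlib

/-- The field with two elements. -/
abbrev F2 := ZMod 2

/-- The phase space `V = 𝔽₂ⁿ × 𝔽₂ⁿ`. -/
abbrev V (n : ℕ) : Type := (Fin n → F2) × (Fin n → F2)

/-- The symplectic form `[a,b] = aₓ·b_z + a_z·bₓ` on `V n`. -/
def symp {n : ℕ} (a b : V n) : F2 :=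
  (∑ i, a.1 i * b.2 i) + (∑ i, a.2 i * b.1 i)

/-- A subspace is isotropic if the symplectic form vanishes on it. -/
def IsIsotropic {n : ℕ} (S : Submodule F2 (V n)) : Prop :=
  ∀ x ∈ S, ∀ y ∈ S, symp x y = 0

/-- A Lagrangian subspace is an isotropic subspace of dimension `n`. -/
def IsLagrangian {n : ℕ} (S : Submodule F2 (V n)) : Prop :=
  IsIsotropic S ∧ Module.finrank F2 S = n

/-- Gaussian binomial coefficient `binom(m,r)₂`. -/
def gaussBinom (m r : ℕ) : ℚ :=
  ∏ i ∈ Finset.range r, ((2 ^ (m - i) - 1 : ℚ) / (2 ^ (r - i) - 1))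

/-!
Count ordered bases `(v₁, …, v_m)` of isotropic subspaces meeting `L` trivially in two ways.
A basis of such an `S` of dimension `k` extends by `v` exactly when `v ∈ S^⊥ \ (S ⊕ L)`.
Since `L^⊥ = L`, we get `S^⊥ + L = V`, so `S^⊥ ∩ (S ⊕ L)` has dimension `n` and there are
`2^(2n-k) - 2^n` choices for `v`. On the other hand every `m`-dimensional `S` has
`∏_{i<m} (2^m - 2^i)` ordered bases; dividing gives the formula.
-/

open Module Submodule Set Finset

lemma Nat.card_eq_card_mul_of_card_fiber_eq {α β : Type*} [Finite α] [Finite β] (f : α → β)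
    {c : ℕ} (h : ∀ b, Nat.card {a // f a = b} = c) : Nat.card α = Nat.card β * c := by
  have := Fintype.ofFinite β
  rw [Nat.card_congr (Equiv.sigmaFiberEquiv f).symm, Nat.card_sigma, Finset.sum_congr rfl
    fun b _ => h b, sum_const, Finset.card_univ, ← Nat.card_eq_fintype_card, smul_eq_mul]

namespace Submodule

variable {K W : Type*} [Field K] [AddCommGroup W] [Module K W]

lemma disjoint_span_singleton_sup_iff {S L : Submodule K W} {v : W} (hv : v ∉ S)
    (hSL : Disjoint S L) : Disjoint (K ∙ v ⊔ S) L ↔ v ∉ S ⊔ L := by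
  have hv0 : v ≠ 0 := by rintro rfl; exact hv S.zero_mem
  have hvS : Disjoint (K ∙ v) S := ((disjoint_span_singleton' hv0).mpr hv).symm
  rw [← disjoint_span_singleton' hv0, disjoint_comm (a := S ⊔ L)]
  exact ⟨hvS.disjoint_sup_right_of_disjoint_sup_left, hSL.disjoint_sup_left_of_disjoint_sup_right⟩

variable [Fintype K] [Finite W]

lemma natCard_coe_diff (P Q : Submodule K W) :
    Nat.card ↥((P : Set W) \ Q) =
      Fintype.card K ^ finrank K P - Fintype.card K ^ finrank K ↥(P ⊓ Q) := by
  have h := Set.ncard_inter_add_ncard_sdiff_eq_ncard (P : Set W) Q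
  rw [← Nat.card_coe_set_eq, ← Nat.card_coe_set_eq, ← Nat.card_coe_set_eq, ← coe_inf] at h
  simp only [SetLike.coe_sort_coe] at h
  rw [natCard_eq_pow_finrank (K := K) (V := P), natCard_eq_pow_finrank (K := K) (V := ↥(P ⊓ Q)),
    Nat.card_eq_fintype_card (α := K)] at h
  omega

lemma natCard_linearIndependent_span_eq {k : ℕ} (S : Submodule K W) (hS : finrank K S = k) :
    Nat.card {s : Fin k → W // LinearIndependent K s ∧ span K (range s) = S} =
      ∏ i : Fin k, (Fintype.card K ^ k - Fintype.card K ^ (i : ℕ)) := by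
  have hspan {t : Fin k → S} (ht : LinearIndependent K t) : span K (range (S.subtype ∘ t)) = S :=
    eq_of_le_of_finrank_eq (span_le.mpr (range_subset_iff.mpr fun i => (t i).2))
      (by rw [finrank_span_eq_card (ht.map' _ S.ker_subtype), Fintype.card_fin, hS])
  let e : {s : Fin k → W // LinearIndependent K s ∧ span K (range s) = S} ≃
      {t : Fin k → S // LinearIndependent K t} :=
    { toFun s := ⟨fun i => ⟨s.1 i, s.2.2.le (subset_span (mem_range_self i))⟩,
        LinearIndependent.of_comp S.subtype s.2.1⟩
      invFun t := ⟨S.subtype ∘ t.1, t.2.map' _ S.ker_subtype, hspan t.2⟩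
      left_inv _ := rfl
      right_inv _ := rfl }
  rw [Nat.card_congr e, card_linearIndependent hS.ge, hS]

end Submodule

namespace LinearMap.BilinForm

variable {K W : Type*} [Field K] [AddCommGroup W] [Module K W] {B : LinearMap.BilinForm K W}

lemma orthogonal_sup (N N' : Submodule K W) :
    B.orthogonal (N ⊔ N') = B.orthogonal N ⊓ B.orthogonal N' := by
  refine le_antisymm (le_inf (orthogonal_le le_sup_left) (orthogonal_le le_sup_right)) ?_
  rintro x ⟨hN, hN'⟩ y hy
  obtain ⟨a, ha, b, hb, rfl⟩ := mem_sup.mp hy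
  simp [hN a ha, hN' b hb]

lemma IsRefl.le_orthogonal_comm (hB : B.IsRefl) {N N' : Submodule K W} :
    N ≤ B.orthogonal N' ↔ N' ≤ B.orthogonal N :=
  ⟨fun h x hx _ hy => hB _ _ (h hy x hx), fun h x hx _ hy => hB _ _ (h hy x hx)⟩

lemma span_singleton_sup_le_orthogonal_iff (hB : B.IsAlt) {S : Submodule K W}
    (hS : S ≤ B.orthogonal S) (v : W) :
    K ∙ v ⊔ S ≤ B.orthogonal (K ∙ v ⊔ S) ↔ v ∈ B.orthogonal S := by
  have hvv : K ∙ v ≤ B.orthogonal (K ∙ v) := by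
    rw [span_singleton_le_iff_mem]
    intro y hy
    obtain ⟨c, rfl⟩ := mem_span_singleton.mp hy
    simp [hB.self_eq_zero v]
  have hvS : K ∙ v ≤ B.orthogonal S ↔ v ∈ B.orthogonal S := span_singleton_le_iff_mem _ _
  rw [orthogonal_sup, sup_le_iff, le_inf_iff, le_inf_iff, hB.isRefl.le_orthogonal_comm (N := S)]
  tauto

section FiniteDimensional

variable [FiniteDimensional K W] {S L : Submodule K W}

lemma orthogonal_sup_eq_top (hB : B.Nondegenerate) (hR : B.IsRefl) (hL : B.orthogonal L = L)
    (hSL : Disjoint S L) : B.orthogonal S ⊔ L = ⊤ := by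
  rw [← orthogonal_orthogonal hB hR (B.orthogonal S ⊔ L), orthogonal_sup,
    orthogonal_orthogonal hB hR, hL, hSL.eq_bot, orthogonal_bot]

lemma finrank_orthogonal_inf_sup (hB : B.Nondegenerate) (hR : B.IsRefl)
    (hL : B.orthogonal L = L) (hSL : Disjoint S L) :
    finrank K ↥(B.orthogonal S ⊓ (S ⊔ L)) = finrank K L := by
  have hW : finrank K W = 2 * finrank K L := by
    have := finrank_orthogonal hB L
    rw [hL] at this
    have := L.finrank_le
    omega
  have hSL' : finrank K ↥(S ⊔ L) = finrank K S + finrank K L := by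
    have := finrank_sup_add_finrank_inf_eq S L
    rw [hSL.eq_bot, finrank_bot] at this
    omega
  have htop : B.orthogonal S ⊔ (S ⊔ L) = ⊤ :=
    top_le_iff.mp ((orthogonal_sup_eq_top hB hR hL hSL).ge.trans (sup_le_sup_left le_sup_right _))
  have := finrank_sup_add_finrank_inf_eq (B.orthogonal S) (S ⊔ L)
  rw [htop, finrank_top, finrank_orthogonal hB, hSL'] at this
  have := S.finrank_le
  omega

end FiniteDimensional

variable (B) (L : Submodule K W)

def IsTransverseIsotropic (S : Submodule K W) : Prop :=
  S ≤ B.orthogonal S ∧ Disjoint S L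

def IsTransverseIsotropicFrame {k : ℕ} (s : Fin k → W) : Prop :=
  LinearIndependent K s ∧ B.IsTransverseIsotropic L (span K (Set.range s))

variable {B L}

lemma IsTransverseIsotropic.mono {S T : Submodule K W} (hT : B.IsTransverseIsotropic L T)
    (hST : S ≤ T) : B.IsTransverseIsotropic L S :=
  ⟨hST.trans (hT.1.trans (orthogonal_le hST)), hT.2.mono_left hST⟩

lemma IsTransverseIsotropicFrame.init {k : ℕ} {s : Fin (k + 1) → W}
    (hs : B.IsTransverseIsotropicFrame L s) : B.IsTransverseIsotropicFrame L (Fin.init s) :=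
  ⟨hs.1.comp _ (Fin.castSucc_injective k),
    hs.2.mono (span_mono (Set.range_comp_subset_range Fin.castSucc s))⟩

lemma isTransverseIsotropicFrame_snoc_iff (hB : B.IsAlt) {k : ℕ} {t : Fin k → W}
    (ht : B.IsTransverseIsotropicFrame L t) (v : W) :
    B.IsTransverseIsotropicFrame L (Fin.snoc t v) ↔
      v ∈ B.orthogonal (span K (Set.range t)) ∧ v ∉ span K (Set.range t) ⊔ L := by
  rw [IsTransverseIsotropicFrame, IsTransverseIsotropic, linearIndependent_finSnoc, Fin.range_snoc,
    span_insert, span_singleton_sup_le_orthogonal_iff hB ht.2.1]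
  constructor
  · rintro ⟨⟨-, hvS⟩, horth, hdisj⟩
    exact ⟨horth, (disjoint_span_singleton_sup_iff hvS ht.2.2).mp hdisj⟩
  · rintro ⟨horth, hvSL⟩
    have hvS : v ∉ span K (Set.range t) := fun h => hvSL (mem_sup_left h)
    exact ⟨⟨ht.1, hvS⟩, horth, (disjoint_span_singleton_sup_iff hvS ht.2.2).mpr hvSL⟩

section Counting

variable [Fintype K] [Finite W]

lemma natCard_isTransverseIsotropicFrame_succ (hB : B.Nondegenerate) (hA : B.IsAlt)
    (hL : B.orthogonal L = L) (k : ℕ) :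
    Nat.card {s : Fin (k + 1) → W // B.IsTransverseIsotropicFrame L s} =
      Nat.card {t : Fin k → W // B.IsTransverseIsotropicFrame L t} *
        (Fintype.card K ^ (finrank K W - k) - Fintype.card K ^ finrank K L) := by
  refine Nat.card_eq_card_mul_of_card_fiber_eq (fun s => ⟨Fin.init s.1, s.2.init⟩) fun t => ?_
  set S := span K (Set.range t.1)
  have hS : finrank K S = k := by rw [finrank_span_eq_card t.2.1, Fintype.card_fin]
  have hsnoc {s : Fin (k + 1) → W} (hs : Fin.init s = t.1) : Fin.snoc t.1 (s (Fin.last k)) = s :=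
    hs ▸ Fin.snoc_init_self s
  let e : {s : {s // B.IsTransverseIsotropicFrame L s} // ⟨Fin.init s.1, s.2.init⟩ = t} ≃
      ↥((B.orthogonal S : Set W) \ (S ⊔ L : Submodule K W)) :=
    { toFun s := ⟨s.1.1 (Fin.last k), (isTransverseIsotropicFrame_snoc_iff hA t.2 _).mp
        ((hsnoc (congrArg Subtype.val s.2)).symm ▸ s.1.2)⟩
      invFun v := ⟨⟨Fin.snoc t.1 v, (isTransverseIsotropicFrame_snoc_iff hA t.2 _).mpr v.2⟩,
        Subtype.ext (Fin.init_snoc (α := fun _ => W) _ _)⟩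
      left_inv s := Subtype.ext (Subtype.ext (hsnoc (congrArg Subtype.val s.2)))
      right_inv v := Subtype.ext (Fin.snoc_last (α := fun _ => W) _ _) }
  rw [Nat.card_congr e, natCard_coe_diff, finrank_orthogonal hB, hS,
    finrank_orthogonal_inf_sup hB hA.isRefl hL t.2.2.2]

lemma natCard_isTransverseIsotropicFrame (hB : B.Nondegenerate) (hA : B.IsAlt)
    (hL : B.orthogonal L = L) (k : ℕ) :
    Nat.card {s : Fin k → W // B.IsTransverseIsotropicFrame L s} =
      ∏ i ∈ Finset.range k, (Fintype.card K ^ (finrank K W - i) - Fintype.card K ^ finrank K L) := by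
  induction k with
  | zero =>
    have hempty : B.IsTransverseIsotropicFrame L (Fin.elim0 : Fin 0 → W) := by
      refine ⟨linearIndependent_empty_type, ?_, ?_⟩ <;> simp
    rw [Nat.card_congr (Equiv.subtypeUnivEquiv fun s => Subsingleton.elim s _ ▸ hempty)]
    simp
  | succ k ih => rw [natCard_isTransverseIsotropicFrame_succ hB hA hL, ih, prod_range_succ]

lemma natCard_isTransverseIsotropicFrame_eq_mul (k : ℕ) :
    Nat.card {s : Fin k → W // B.IsTransverseIsotropicFrame L s} =
      Nat.card {S : Submodule K W // B.IsTransverseIsotropic L S ∧ finrank K S = k} *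
        ∏ i : Fin k, (Fintype.card K ^ k - Fintype.card K ^ (i : ℕ)) := by
  refine Nat.card_eq_card_mul_of_card_fiber_eq (fun s => ⟨span K (Set.range s.1), s.2.2,
    by rw [finrank_span_eq_card s.2.1, Fintype.card_fin]⟩) fun S => ?_
  let e : {s : {s // B.IsTransverseIsotropicFrame L s} // ⟨span K (Set.range s.1), s.2.2,
        by rw [finrank_span_eq_card s.2.1, Fintype.card_fin]⟩ = S} ≃
      {s : Fin k → W // LinearIndependent K s ∧ span K (Set.range s) = S} :=
    { toFun s := ⟨s.1.1, s.1.2.1, congrArg Subtype.val s.2⟩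
      invFun s := ⟨⟨s.1, s.2.1, by rw [s.2.2]; exact S.2.1⟩, Subtype.ext s.2.2⟩
      left_inv _ := rfl
      right_inv _ := rfl }
  rw [Nat.card_congr e, natCard_linearIndependent_span_eq _ S.2.2]

end Counting

end LinearMap.BilinForm

noncomputable def sympForm (n : ℕ) : LinearMap.BilinForm F2 (V n) :=
  LinearMap.mk₂ F2 symp
    (by intro a b c; simp only [symp, Prod.fst_add, Prod.snd_add, Pi.add_apply, add_mul,
      sum_add_distrib]; ring)
    (by intro r a b; simp [symp, mul_sum, mul_assoc, mul_add])
    (by intro a b c; simp only [symp, Prod.fst_add, Prod.snd_add, Pi.add_apply, mul_add,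
      sum_add_distrib]; ring)
    (by intro r a b; simp [symp, mul_sum, mul_left_comm, mul_add])

@[simp] lemma sympForm_apply {n : ℕ} (a b : V n) : sympForm n a b = symp a b := rfl

lemma sympForm_isAlt (n : ℕ) : (sympForm n).IsAlt := fun a => by
  simp only [sympForm_apply, symp, mul_comm (a.2 _)]
  exact CharTwo.add_self_eq_zero _

lemma sympForm_nondegenerate (n : ℕ) : (sympForm n).Nondegenerate := by
  refine (sympForm_isAlt n).isRefl.nondegenerate_iff_separatingLeft.mpr fun a ha => ?_
  have hx i : a.1 i = 0 := by simpa [symp, Pi.single_apply] using ha (0, Pi.single i 1)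
  have hz i : a.2 i = 0 := by simpa [symp, Pi.single_apply] using ha (Pi.single i 1, 0)
  exact Prod.ext (funext hx) (funext hz)

lemma finrank_V (n : ℕ) : finrank F2 (V n) = 2 * n := by
  rw [finrank_prod, finrank_fin_fun, two_mul]

lemma isIsotropic_iff_le_orthogonal {n : ℕ} {S : Submodule F2 (V n)} :
    IsIsotropic S ↔ S ≤ (sympForm n).orthogonal S :=
  ⟨fun h x hx y hy => h y hy x hx, fun h x hx _ hy => h hy x hx⟩

lemma IsLagrangian.orthogonal_eq {n : ℕ} {L : Submodule F2 (V n)} (hL : IsLagrangian L) :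
    (sympForm n).orthogonal L = L := by
  refine (eq_of_le_of_finrank_le (isIsotropic_iff_le_orthogonal.mp hL.1) ?_).symm
  rw [LinearMap.BilinForm.finrank_orthogonal (sympForm_nondegenerate n), finrank_V, hL.2]
  omega

lemma sum_range_sub_eq {n m : ℕ} (hm : m ≤ n) :
    ∑ i ∈ Finset.range m, (n - i) = m * (m + 1) / 2 + m * (n - m) := by
  induction m with
  | zero => simp
  | succ k ih =>
    rw [sum_range_succ, ih (by omega)]
    obtain ⟨d, rfl⟩ : ∃ d, n = k + 1 + d := ⟨n - (k + 1), by omega⟩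
    have : (k + 1) * (k + 1 + 1) / 2 = k * (k + 1) / 2 + (k + 1) := by
      rw [show (k + 1) * (k + 1 + 1) = k * (k + 1) + (k + 1) * 2 by ring,
        Nat.add_mul_div_right _ _ two_pos]
    rw [this, show k + 1 + d - k = d + 1 by omega, show k + 1 + d - (k + 1) = d by omega]
    ring

lemma gaussBinom_mul_prod_eq {n m : ℕ} (hm : m ≤ n) :
    gaussBinom n m * 2 ^ (m * (m + 1) / 2) * 2 ^ (m * (n - m)) *
        ∏ i ∈ Finset.range m, ((2 : ℚ) ^ m - 2 ^ i) =
      ∏ i ∈ Finset.range m, ((2 : ℚ) ^ (2 * n - i) - 2 ^ n) := by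
  rw [mul_assoc (gaussBinom n m), ← pow_add, ← sum_range_sub_eq hm, ← prod_pow_eq_pow_sum,
    gaussBinom, ← prod_mul_distrib, ← prod_mul_distrib]
  refine prod_congr rfl fun i hi => ?_
  obtain ⟨a, rfl⟩ : ∃ a, m = i + (a + 1) := ⟨m - i - 1, by simp at hi; omega⟩
  obtain ⟨b, rfl⟩ : ∃ b, n = i + b := ⟨n - i, by omega⟩
  have hden : (2 : ℚ) ^ (a + 1) - 1 ≠ 0 := by
    have : (1 : ℚ) < 2 ^ (a + 1) := one_lt_pow₀ one_lt_two (by omega)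
    linarith
  rw [show i + (a + 1) - i = a + 1 by omega, show i + b - i = b by omega,
    show 2 * (i + b) - i = i + b + b by omega]
  field_simp
  ring

lemma cast_prod_two_pow_sub_two_pow {m : ℕ} {f g : ℕ → ℕ} (h : ∀ i < m, g i ≤ f i) :
    ((∏ i ∈ Finset.range m, (2 ^ f i - 2 ^ g i) : ℕ) : ℚ) =
      ∏ i ∈ Finset.range m, ((2 : ℚ) ^ f i - 2 ^ g i) := by
  rw [Nat.cast_prod]
  refine prod_congr rfl fun i hi => ?_
  rw [Nat.cast_sub (Nat.pow_le_pow_right two_pos (h i (mem_range.mp hi)))]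
  push_cast
  rfl

/-- For a fixed Lagrangian `L ⊂ 𝔽₂^{2n}` and `0 ≤ m ≤ n`, the number of
`m`-dimensional isotropic subspaces `S` with `S ∩ L = {0}` equals
`binom(n,m)₂ · 2^{m(m+1)/2} · 2^{m(n−m)}`. -/
theorem stmt1 (n m : ℕ) (hm : m ≤ n) (L : Submodule F2 (V n)) (hL : IsLagrangian L) :
    (Nat.card {S : Submodule F2 (V n) //
        IsIsotropic S ∧ Module.finrank F2 S = m ∧ S ⊓ L = ⊥} : ℚ)
      = gaussBinom n m * 2 ^ (m * (m + 1) / 2) * 2 ^ (m * (n - m)) := by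
  have hset : {S : Submodule F2 (V n) // IsIsotropic S ∧ finrank F2 S = m ∧ S ⊓ L = ⊥} ≃
      {S // (sympForm n).IsTransverseIsotropic L S ∧ finrank F2 S = m} :=
    Equiv.subtypeEquivRight fun S => by
      rw [LinearMap.BilinForm.IsTransverseIsotropic, isIsotropic_iff_le_orthogonal, disjoint_iff]
      tauto
  have hcount := (LinearMap.BilinForm.natCard_isTransverseIsotropicFrame_eq_mul m).symm.trans
    (LinearMap.BilinForm.natCard_isTransverseIsotropicFrame
      (sympForm_nondegenerate n) (sympForm_isAlt n) hL.orthogonal_eq m)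
  rw [← Nat.card_congr hset, ZMod.card, finrank_V, hL.2,
    Fin.prod_univ_eq_prod_range (fun i => 2 ^ m - 2 ^ i)] at hcount
  have hcountℚ := congrArg (Nat.cast : ℕ → ℚ) hcount
  rw [Nat.cast_mul, cast_prod_two_pow_sub_two_pow fun i hi => hi.le,
    cast_prod_two_pow_sub_two_pow fun i hi => by omega, ← gaussBinom_mul_prod_eq hm] at hcountℚ
  refine mul_right_cancel₀ (prod_ne_zero_iff.mpr fun i hi => ?_) hcountℚ
  exact sub_ne_zero.mpr (pow_lt_pow_right₀ one_lt_two (mem_range.mp hi)).ne'
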